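/- arXiv:1802.02000 — 5 statements merged into one kernel-verified Lean document; each statement's English description precedes it below -/
import Mathlib

section
/- Every subgroup of PGL(2,ℤ) of order 2 is conjugate in PGL(2,ℤ) to one of the three subgroups generated by [S], by [N], or by [T]; that is, for every subgroup H of PGL(2,ℤ) with exactly 2 elements there exists g ∈ PGL(2,ℤ) such that g H g⁻¹ equals ⟨[S]⟩, ⟨[N]⟩, or ⟨[T]⟩. -/
open Matrix

abbrev GL2Z := GL (Fin 2) ℤ

/-- PGL(2,ℤ): the quotient of GL(2,ℤ) by its center {I, -I}. -/
abbrev PGL2Z := GL2Z ⧸ Subgroup.center GL2Z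

/-- The image of a matrix in PGL(2,ℤ). -/
def cls (M : GL2Z) : PGL2Z := QuotientGroup.mk M

def Smat : GL2Z := ⟨!![0,1;1,0], !![0,1;1,0], by decide, by decide⟩
def Nmat : GL2Z := ⟨!![-1,0;0,1], !![-1,0;0,1], by decide, by decide⟩
def Tmat : GL2Z := ⟨!![0,-1;1,0], !![0,1;-1,0], by decide, by decide⟩
def Umat : GL2Z := ⟨!![0,-1;1,1], !![1,1;-1,0], by decide, by decide⟩


abbrev Mat2 := Matrix (Fin 2) (Fin 2) ℤ

def EL : GL2Z := ⟨!![1,1;0,1], !![1,-1;0,1], by decide, by decide⟩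
def FL : GL2Z := ⟨!![1,0;1,1], !![1,0;-1,1], by decide, by decide⟩

lemma center_iff (M : GL2Z) : M ∈ Subgroup.center GL2Z ↔ M = 1 ∨ M = -1 := by
  constructor
  · intro h
    have h1 := congrArg Units.val ((Subgroup.mem_center_iff.mp h) EL)
    have h2 := congrArg Units.val ((Subgroup.mem_center_iff.mp h) FL)
    have hA : (M : Mat2) = !![M.val 0 0, M.val 0 1; M.val 1 0, M.val 1 1] := Matrix.eta_fin_two _
    set a := M.val 0 0; set b := M.val 0 1; set c := M.val 1 0; set d := M.val 1 1
    simp only [Units.val_mul, EL, FL] at h1 h2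
    rw [hA, Matrix.mul_fin_two, Matrix.mul_fin_two] at h1 h2
    have e1 := congrFun (congrFun h1 0) 0
    have e2 := congrFun (congrFun h1 0) 1
    have e3 := congrFun (congrFun h2 0) 0
    simp at e1 e2 e3
    have hdet : a * d - b * c = 1 ∨ a * d - b * c = -1 := by
      have : IsUnit ((M : Mat2).det) := (Matrix.isUnit_iff_isUnit_det _).mp M.isUnit
      rw [hA, Matrix.det_fin_two] at this
      simpa using Int.isUnit_iff.mp this
    have hc : c = 0 := by omega
    have hb : b = 0 := by omega
    have hd : d = a := by omega
    have ha : a = 1 ∨ a = -1 := by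
      rw [hb, hc, hd] at hdet
      rcases hdet with h|h
      · exact Int.eq_one_or_neg_one_of_mul_eq_one (by linarith)
      · exfalso; nlinarith [sq_nonneg a]
    rcases ha with ha | ha
    · left; ext : 1; rw [hA, hb, hc, hd, ha]; exact (Matrix.one_fin_two).symm
    · right; ext : 1; rw [hA, hb, hc, hd, ha]
      show _ = -(1 : Mat2); rw [Matrix.one_fin_two]; norm_num
  · rintro (rfl|rfl) <;> exact Subgroup.mem_center_iff.mpr (fun g => by simp)
def EN (n : ℤ) : GL2Z :=
  ⟨!![1,n;0,1], !![1,-n;0,1],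
   by ext i j; fin_cases i <;> fin_cases j <;> simp [Matrix.mul_apply, Fin.sum_univ_succ],
   by ext i j; fin_cases i <;> fin_cases j <;> simp [Matrix.mul_apply, Fin.sum_univ_succ]⟩
def Q1 : GL2Z := ⟨!![1,1;1,0], !![0,1;1,-1], by decide, by decide⟩
def Q2 : GL2Z := ⟨!![-1,1;1,0], !![0,1;1,1], by decide, by decide⟩

def Target (A : Mat2) : Prop :=
  A = !![0,1;1,0] ∨ A = !![0,-1;-1,0] ∨ A = !![-1,0;0,1] ∨ A = !![1,0;0,-1] ∨
  A = !![0,-1;1,0] ∨ A = !![0,1;-1,0]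

lemma conj_chain (M P : GL2Z)
    (H : ∃ Q : GL2Z, Target ((Q * (P * M * P⁻¹) * Q⁻¹ : GL2Z) : Mat2)) :
    ∃ R : GL2Z, Target ((R * M * R⁻¹ : GL2Z) : Mat2) := by
  obtain ⟨Q, hQ⟩ := H
  exact ⟨Q * P, by rw [show Q * P * M * (Q*P)⁻¹ = Q * (P * M * P⁻¹) * Q⁻¹ by group]; exact hQ⟩

lemma EN_conj_val (n a b c : ℤ) (M : GL2Z) (hM : (M : Mat2) = !![a,b;c,-a]) :
    ((EN n * M * (EN n)⁻¹ : GL2Z) : Mat2) = !![a+n*c, b-2*n*a-n^2*c; c, -(a+n*c)] := by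
  have h2 : ((EN n)⁻¹ : GL2Z) = (!![1,-n;0,1] : Mat2) := rfl
  have h1 : ((EN n : GL2Z) : Mat2) = !![1,n;0,1] := rfl
  rw [Units.val_mul, Units.val_mul, h1, h2, hM, Matrix.mul_fin_two, Matrix.mul_fin_two]
  congr 1 <;> ring_nf

lemma T_conj_val (a b c : ℤ) (M : GL2Z) (hM : (M : Mat2) = !![a,b;c,-a]) :
    ((Tmat * M * Tmat⁻¹ : GL2Z) : Mat2) = !![-a,-c;-b,a] := by
  have h2 : ((Tmat⁻¹ : GL2Z) : Mat2) = !![0,1;-1,0] := rfl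
  have h1 : ((Tmat : GL2Z) : Mat2) = !![0,-1;1,0] := rfl
  rw [Units.val_mul, Units.val_mul, h1, h2, hM, Matrix.mul_fin_two, Matrix.mul_fin_two]
  congr 1 <;> ring_nf

lemma N_conj_val (a b c : ℤ) (M : GL2Z) (hM : (M : Mat2) = !![a,b;c,-a]) :
    ((Nmat * M * Nmat⁻¹ : GL2Z) : Mat2) = !![a,-b;-c,-a] := by
  have h2 : ((Nmat⁻¹ : GL2Z) : Mat2) = !![-1,0;0,1] := rfl
  have h1 : ((Nmat : GL2Z) : Mat2) = !![-1,0;0,1] := rfl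
  rw [Units.val_mul, Units.val_mul, h1, h2, hM, Matrix.mul_fin_two, Matrix.mul_fin_two]
  congr 1 <;> ring_nf

lemma Q1_conj_val (M : GL2Z) (hM : (M : Mat2) = !![1,1;0,-1]) :
    ((Q1 * M * Q1⁻¹ : GL2Z) : Mat2) = !![0,1;1,0] := by
  have h2 : ((Q1⁻¹ : GL2Z) : Mat2) = !![0,1;1,-1] := rfl
  have h1 : ((Q1 : GL2Z) : Mat2) = !![1,1;1,0] := rfl
  rw [Units.val_mul, Units.val_mul, h1, h2, hM, Matrix.mul_fin_two, Matrix.mul_fin_two]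
  norm_num

lemma Q2_conj_val (M : GL2Z) (hM : (M : Mat2) = !![-1,1;0,1]) :
    ((Q2 * M * Q2⁻¹ : GL2Z) : Mat2) = !![0,1;1,0] := by
  have h2 : ((Q2⁻¹ : GL2Z) : Mat2) = !![0,1;1,1] := rfl
  have h1 : ((Q2 : GL2Z) : Mat2) = !![-1,1;1,0] := rfl
  rw [Units.val_mul, Units.val_mul, h1, h2, hM, Matrix.mul_fin_two, Matrix.mul_fin_two]
  norm_num

lemma shrink (a b c ε : ℤ) (hc : 2 ≤ c) (hε : ε = 1 ∨ ε = -1) (h : a^2 + b*c = ε) :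
    ∃ m a' b' : ℤ, a' = a + m*c ∧ b' = b - 2*m*a - m^2*c ∧ a'^2 + b'*c = ε ∧
      b'.natAbs < c.natAbs := by
  have hc0 : c ≠ 0 := by omega
  have key : ∀ a' : ℤ, c ∣ a' - a → 2*a' ≤ c → -c ≤ 2*a' →
      ∃ m a2 b' : ℤ, a2 = a + m*c ∧ b' = b - 2*m*a - m^2*c ∧ a2^2 + b'*c = ε ∧
        b'.natAbs < c.natAbs := by
    intro a' hdvd h1 h2
    have hmc : (a' - a) / c * c = a' - a := Int.ediv_mul_cancel hdvd
    set m : ℤ := (a' - a) / c with hm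
    have ha'' : a' = a + m*c := by omega
    set b' : ℤ := b - 2*m*a - m^2*c with hb'
    have hinv : a'^2 + b'*c = ε := by rw [ha'', hb']; linear_combination h
    refine ⟨m, a', b', ha'', rfl, hinv, ?_⟩
    have h4 : 4*a'^2 ≤ c^2 := by nlinarith
    have he : b'*c = ε - a'^2 := by linarith
    have h1' : (b'*c)^2 ≤ (a'^2+1)^2 := by rcases hε with rfl|rfl <;> nlinarith [sq_nonneg a']
    have hc2 : 0 < c^2 := by positivity
    have hA : a'^2 + 1 < c^2 := by nlinarith
    have hB : (a'^2+1)^2 < (c^2)^2 := by nlinarith [sq_nonneg a']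
    have hsq : b'^2 < c^2 := by nlinarith [mul_pow b' c 2]
    have h6 : b'.natAbs^2 < c.natAbs^2 := by
      have : (b'.natAbs : ℤ)^2 < (c.natAbs : ℤ)^2 := by
        rw [Int.natAbs_sq, Int.natAbs_sq]; exact hsq
      exact_mod_cast this
    exact (Nat.pow_lt_pow_iff_left (by norm_num)).mp h6
  have hr0 : 0 ≤ a % c := Int.emod_nonneg a hc0
  have hrc : a % c < c := Int.emod_lt_of_pos a (by omega)
  have hd1 : c ∣ (a % c) - a := ⟨-(a/c), by rw [Int.emod_def]; ring⟩
  rcases le_or_gt (2*(a % c)) c with hle | hlt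
  · exact key (a % c) hd1 hle (by omega)
  · exact key (a % c - c) ⟨-(a/c) - 1, by rw [Int.emod_def]; ring⟩ (by omega) (by omega)

/-- terminal case c = 0 -/
lemma red0 (a b ε : ℤ) (hε : ε = 1 ∨ ε = -1) (h : a^2 + b*0 = ε) (M : GL2Z)
    (hM : (M : Mat2) = !![a,b;0,-a]) :
    ∃ P : GL2Z, Target ((P * M * P⁻¹ : GL2Z) : Mat2) := by
  have ha2 : a^2 = ε := by linarith
  have ha : a = 1 ∨ a = -1 := by
    rcases hε with rfl|rfl
    · exact Int.eq_one_or_neg_one_of_mul_eq_one (by nlinarith)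
    · exfalso; nlinarith [sq_nonneg a]
  rcases ha with rfl | rfl
  · -- a = 1, conj by EN (b/2): val !![1, b - 2*(b/2); 0, -1]
    set q : ℤ := b / 2 with hq
    have hval := EN_conj_val q 1 b 0 M hM
    have hval' : ((EN q * M * (EN q)⁻¹ : GL2Z) : Mat2) = !![1, b - 2*q; 0, -1] := by
      rw [hval]; norm_num
    have hr : b - 2*q = 0 ∨ b - 2*q = 1 := by omega
    rcases hr with hr | hr
    · exact ⟨EN q, by rw [hval', hr]; right;right;right;left; rfl⟩
    · apply conj_chain M (EN q)
      exact ⟨Q1, by rw [Q1_conj_val _ (by rw [hval', hr])]; left; rfl⟩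
  · set q : ℤ := -(b / 2) with hq
    have hval := EN_conj_val q (-1) b 0 M hM
    have hval' : ((EN q * M * (EN q)⁻¹ : GL2Z) : Mat2) = !![-1, b + 2*q; 0, 1] := by
      rw [hval]; norm_num
    have hr : b + 2*q = 0 ∨ b + 2*q = 1 := by omega
    rcases hr with hr | hr
    · exact ⟨EN q, by rw [hval', hr]; right;right;left; rfl⟩
    · apply conj_chain M (EN q)
      exact ⟨Q2, by rw [Q2_conj_val _ (by rw [hval', hr])]; left; rfl⟩

/-- terminal case |c| = 1 -/
lemma red1 (a b c ε : ℤ) (hc : c = 1 ∨ c = -1) (hε : ε = 1 ∨ ε = -1) (h : a^2 + b*c = ε)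
    (M : GL2Z) (hM : (M : Mat2) = !![a,b;c,-a]) :
    ∃ P : GL2Z, Target ((P * M * P⁻¹ : GL2Z) : Mat2) := by
  rcases hc with rfl | rfl
  · have hval := EN_conj_val (-a) a b 1 M hM
    have hval' : ((EN (-a) * M * (EN (-a))⁻¹ : GL2Z) : Mat2) = !![0, ε; 1, 0] := by
      have e1 : a + (-a)*1 = 0 := by ring
      have e2 : b - 2*(-a)*a - (-a)^2*1 = ε := by linear_combination h
      rw [hval, e1, e2]; norm_num
    rcases hε with rfl | rfl
    · exact ⟨EN (-a), by rw [hval']; left; rfl⟩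
    · exact ⟨EN (-a), by rw [hval']; right;right;right;right;left; rfl⟩
  · have hval := EN_conj_val a a b (-1) M hM
    have hval' : ((EN a * M * (EN a)⁻¹ : GL2Z) : Mat2) = !![0, -ε; -1, 0] := by
      have e1 : a + a*(-1) = 0 := by ring
      have e2 : b - 2*a*a - a^2*(-1) = -ε := by linear_combination -h
      rw [hval, e1, e2]; norm_num
    rcases hε with rfl | rfl
    · exact ⟨EN a, by rw [hval']; right;left; norm_num⟩
    · exact ⟨EN a, by rw [hval']; right;right;right;right;right; norm_num⟩

lemma red : ∀ n : ℕ, ∀ a b c ε : ℤ, c.natAbs ≤ n → (ε = 1 ∨ ε = -1) → a^2 + b*c = ε →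
    ∀ M : GL2Z, (M : Mat2) = !![a,b;c,-a] →
    ∃ P : GL2Z, Target ((P * M * P⁻¹ : GL2Z) : Mat2) := by
  intro n
  induction n with
  | zero =>
    intro a b c ε hn hε h M hM
    have hc : c = 0 := by omega
    subst hc; exact red0 a b ε hε h M hM
  | succ n IH =>
    intro a b c ε hn hε h M hM
    rcases eq_or_ne c 0 with rfl | hc0
    · exact red0 a b ε hε h M hM
    rcases eq_or_ne c.natAbs 1 with hc1 | hc1
    · exact red1 a b c ε (by omega) hε h M hM
    -- |c| ≥ 2
    have hc2 : 2 ≤ c ∨ c ≤ -2 := by omega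
    rcases hc2 with hc2 | hc2
    · obtain ⟨m, a', b', ha', hb', hinv, hlt⟩ := shrink a b c ε hc2 hε h
      apply conj_chain M (EN m)
      have hval : ((EN m * M * (EN m)⁻¹ : GL2Z) : Mat2) = !![a', b'; c, -a'] := by
        rw [EN_conj_val m a b c M hM, ha', hb']
      apply conj_chain _ Tmat
      have hval2 := T_conj_val a' b' c _ hval
      exact IH (-a') (-c) (-b') ε (by omega) hε (by linear_combination hinv) _
        (by rw [hval2]; norm_num)
    · -- c ≤ -2 : first flip sign with Nmat
      apply conj_chain M Nmat
      have hval := N_conj_val a b c M hM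
      obtain ⟨m, a', b', ha', hb', hinv, hlt⟩ :=
        shrink a (-b) (-c) ε (by omega) hε (by linear_combination h)
      apply conj_chain _ (EN m)
      have hval1 : ((EN m * (Nmat * M * Nmat⁻¹) * (EN m)⁻¹ : GL2Z) : Mat2)
          = !![a', b'; -c, -a'] := by
        rw [EN_conj_val m a (-b) (-c) _ hval, ha', hb']
      apply conj_chain _ Tmat
      have hval2 := T_conj_val a' b' (-c) _ hval1
      exact IH (-a') c (-b') ε (by omega) hε (by linear_combination hinv) _
        (by rw [hval2]; norm_num)

lemma neg_mk (K : GL2Z) : (QuotientGroup.mk (-K) : PGL2Z) = QuotientGroup.mk K := by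
  rw [QuotientGroup.eq]
  have : (-K)⁻¹ * K = -1 := by rw [inv_neg]; simp
  rw [inv_neg]
  simp only [neg_mul, inv_mul_cancel]
  exact (center_iff _).mpr (Or.inr rfl)

lemma elt_conj (x : PGL2Z) (hx : orderOf x = 2) :
    ∃ y : PGL2Z, y * x * y⁻¹ = cls Smat ∨ y * x * y⁻¹ = cls Nmat ∨ y * x * y⁻¹ = cls Tmat := by
  obtain ⟨M, rfl⟩ := QuotientGroup.mk_surjective x
  have hx1 : (QuotientGroup.mk M : PGL2Z) ≠ 1 := by
    intro h; rw [orderOf_eq_one_iff.mpr h] at hx; omega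
  have hMc : M ∉ Subgroup.center GL2Z := fun h => hx1 ((QuotientGroup.eq_one_iff M).mpr h)
  have hsq : M^2 ∈ Subgroup.center GL2Z := by
    have h2 : (QuotientGroup.mk M : PGL2Z)^2 = 1 := by
      simpa [hx] using pow_orderOf_eq_one (QuotientGroup.mk M : PGL2Z)
    have h3 : (QuotientGroup.mk (M^2) : PGL2Z) = 1 := by
      rw [QuotientGroup.mk_pow]; exact h2
    exact (QuotientGroup.eq_one_iff _).mp h3
  have hsq' : M.val * M.val = 1 ∨ M.val * M.val = -1 := by
    rcases (center_iff _).mp hsq with h | h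
    · left; simpa [pow_two] using congrArg Units.val h
    · right; simpa [pow_two] using congrArg Units.val h
  have hA : (M : Mat2) = !![M.val 0 0, M.val 0 1; M.val 1 0, M.val 1 1] := Matrix.eta_fin_two _
  set a := M.val 0 0; set b := M.val 0 1; set c := M.val 1 0; set d := M.val 1 1
  -- derive trace zero
  have hd : d = -a ∧ (a^2 + b*c = 1 ∨ a^2 + b*c = -1) := by
    rw [hA, Matrix.mul_fin_two] at hsq'
    rcases hsq' with h | h
    · have e00 := congrFun (congrFun h 0) 0
      have e01 := congrFun (congrFun h 0) 1
      have e10 := congrFun (congrFun h 1) 0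
      have e11 := congrFun (congrFun h 1) 1
      rw [Matrix.one_fin_two] at e00 e01 e10 e11
      simp at e00 e01 e10 e11
      rcases mul_eq_zero.mp (show b*(a+d) = 0 by linarith) with hb | had
      · rcases mul_eq_zero.mp (show c*(a+d) = 0 by linarith) with hcz | had
        · -- b = 0, c = 0 : a^2 = 1, d^2 = 1
          have ha : a = 1 ∨ a = -1 := by
            rcases Int.eq_one_or_neg_one_of_mul_eq_one (show a*a=1 by rw [hb] at e00; linarith)
              with h1|h1 <;> [left;right] <;> linarith
          have hdd : d = 1 ∨ d = -1 := by
            rcases Int.eq_one_or_neg_one_of_mul_eq_one (show d*d=1 by rw [hb] at e11; linarith)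
              with h1|h1 <;> [left;right] <;> linarith
          rcases ha with ha|ha <;> rcases hdd with hdd|hdd
          · exfalso; apply hMc; apply (center_iff M).mpr; left
            ext : 1; rw [hA, ha, hdd, hb, hcz]; exact (Matrix.one_fin_two).symm
          · exact ⟨by omega, by left; rw [hb]; nlinarith⟩
          · exact ⟨by omega, by left; rw [hb]; nlinarith⟩
          · exfalso; apply hMc; apply (center_iff M).mpr; right
            ext : 1; rw [hA, ha, hdd, hb, hcz]
            show _ = -(1 : Mat2); rw [Matrix.one_fin_two]; norm_num
        · exact ⟨by omega, by left; nlinarith⟩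
      · exact ⟨by omega, by left; nlinarith⟩
    · have e00 := congrFun (congrFun h 0) 0
      have e01 := congrFun (congrFun h 0) 1
      have e11 := congrFun (congrFun h 1) 1
      have hneg : (-1 : Mat2) = !![-1,0;0,-1] := by rw [Matrix.one_fin_two]; norm_num
      rw [hneg] at e00 e01 e11
      simp at e00 e01 e11
      rcases mul_eq_zero.mp (show b*(a+d) = 0 by linarith) with hb | had
      · -- b = 0 : a^2 = -1 impossible
        exfalso; rw [hb] at e00; simp at e00; nlinarith [sq_nonneg a]
      · exact ⟨by omega, by right; nlinarith⟩
  obtain ⟨hdval, hinv⟩ := hd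
  have hM' : (M : Mat2) = !![a, b; c, -a] := by rw [hA, hdval]
  obtain ⟨P, hT⟩ : ∃ P : GL2Z, Target ((P * M * P⁻¹ : GL2Z) : Mat2) := by
    rcases hinv with h|h
    · exact red c.natAbs a b c 1 le_rfl (Or.inl rfl) h M hM'
    · exact red c.natAbs a b c (-1) le_rfl (Or.inr rfl) h M hM'
  refine ⟨QuotientGroup.mk P, ?_⟩
  have hyx : (QuotientGroup.mk P : PGL2Z) * QuotientGroup.mk M * (QuotientGroup.mk P)⁻¹
      = QuotientGroup.mk (P * M * P⁻¹) := by
    rw [QuotientGroup.mk_mul, QuotientGroup.mk_mul, QuotientGroup.mk_inv]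
  rw [hyx]
  have hSv : Smat.val = !![0,1;1,0] := rfl
  have hNv : Nmat.val = !![-1,0;0,1] := rfl
  have hTv : Tmat.val = !![0,-1;1,0] := rfl
  rcases hT with h|h|h|h|h|h
  · exact Or.inl (by rw [show P*M*P⁻¹ = Smat from Units.ext (by rw [h, hSv])]; rfl)
  · refine Or.inl ?_
    rw [show P*M*P⁻¹ = -Smat from Units.ext (by rw [h, Units.val_neg, hSv]; norm_num)]
    exact neg_mk Smat
  · exact Or.inr (Or.inl (by rw [show P*M*P⁻¹ = Nmat from Units.ext (by rw [h, hNv])]; rfl))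
  · refine Or.inr (Or.inl ?_)
    rw [show P*M*P⁻¹ = -Nmat from Units.ext (by rw [h, Units.val_neg, hNv]; norm_num)]
    exact neg_mk Nmat
  · exact Or.inr (Or.inr (by rw [show P*M*P⁻¹ = Tmat from Units.ext (by rw [h, hTv])]; rfl))
  · refine Or.inr (Or.inr ?_)
    rw [show P*M*P⁻¹ = -Tmat from Units.ext (by rw [h, Units.val_neg, hTv]; norm_num)]
    exact neg_mk Tmat

/-- Every subgroup of PGL(2,ℤ) of order 2 is conjugate to ⟨[S]⟩, ⟨[N]⟩, or ⟨[T]⟩. -/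
theorem stmt_1 (H : Subgroup PGL2Z) (hH : Nat.card H = 2) :
    ∃ g : PGL2Z,
      Subgroup.map (MulAut.conj g).toMonoidHom H = Subgroup.closure {cls Smat} ∨
      Subgroup.map (MulAut.conj g).toMonoidHom H = Subgroup.closure {cls Nmat} ∨
      Subgroup.map (MulAut.conj g).toMonoidHom H = Subgroup.closure {cls Tmat} := by

  have hfin : Finite H := Nat.finite_of_card_ne_zero (by omega)
  rcases Subgroup.bot_or_exists_ne_one H with rfl | ⟨x, hxH, hx1⟩
  · rw [Subgroup.card_bot] at hH; omega
  have hord : orderOf x = 2 := by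
    have h1 : orderOf (⟨x, hxH⟩ : H) ∣ 2 := by
      have := orderOf_dvd_natCard (⟨x, hxH⟩ : H); rwa [hH] at this
    have h2 : orderOf (⟨x, hxH⟩ : H) ≠ 1 := by
      simp only [ne_eq, orderOf_eq_one_iff]
      intro h; apply hx1; exact congrArg Subtype.val h
    have h3 : orderOf (⟨x, hxH⟩ : H) = 2 := by
      rcases (Nat.prime_two).eq_one_or_self_of_dvd _ h1 with h|h <;> omega
    rw [← Subgroup.orderOf_coe] at h3
    exact h3
  have hHx : H = Subgroup.zpowers x := by
    refine (Subgroup.eq_of_le_of_card_ge (Subgroup.zpowers_le.mpr hxH) ?_).symm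
    rw [hH, Nat.card_zpowers, hord]
  obtain ⟨y, hy⟩ := elt_conj x hord
  refine ⟨y, ?_⟩
  have hmap : Subgroup.map (MulAut.conj y).toMonoidHom H = Subgroup.zpowers (y * x * y⁻¹) := by
    rw [hHx, MonoidHom.map_zpowers]
    congr 1
  rcases hy with hy | hy | hy
  · exact Or.inl (by rw [hmap, hy, Subgroup.zpowers_eq_closure])
  · exact Or.inr (Or.inl (by rw [hmap, hy, Subgroup.zpowers_eq_closure]))
  · exact Or.inr (Or.inr (by rw [hmap, hy, Subgroup.zpowers_eq_closure]))
end

section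
/- Every subgroup of PGL(2,ℤ) of order 3 is conjugate in PGL(2,ℤ) to the subgroup G₃ generated by [U]; that is, for every subgroup H of PGL(2,ℤ) with exactly 3 elements there exists g ∈ PGL(2,ℤ) such that g H g⁻¹ = G₃. -/
open Matrix

/-
An element of order 3 of PGL(2,ℤ) lifts to some `M ∈ GL(2,ℤ)` with `M³ = -1` (replace `M` by `-M`
if `M³ = 1`). Then `(det M)³ = 1`, so `det M = 1`, and Cayley–Hamilton gives
`M³ = (t² - 1) M - t` with `t = tr M`; this forces `t = 1` (or `t = -2` and `M = -1`), i.e.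
`M² = M - 1`. For any vector `v`, the matrix `P` with columns `v, Mv` then
satisfies `M P = P U`, and `det P = Q(v)` for a binary quadratic form `Q` of discriminant
`t² - 4 det M = -3`. Reduction of definite forms shows that `Q` takes a value `±1`, so `v` can be
chosen with `P ∈ GL(2,ℤ)`, and `[P]⁻¹` conjugates `[M]` to `[U]`. Finally, a subgroup of order 3
is generated by any of its nontrivial elements.
-/
theorem exists_sq_two_mul_add_le_sq {A : ℤ} (hA : 0 < A) (B : ℤ) :
    ∃ m : ℤ, (2 * A * m + B) ^ 2 ≤ A ^ 2 := by
  have hdiv : 2 * A * (B / (2 * A)) + B % (2 * A) = B := Int.mul_ediv_add_emod B (2 * A)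
  have hr0 : 0 ≤ B % (2 * A) := Int.emod_nonneg B (by omega)
  have hr1 : B % (2 * A) < 2 * A := Int.emod_lt_of_pos B (by omega)
  by_cases hrA : B % (2 * A) ≤ A
  · exact ⟨-(B / (2 * A)), by nlinarith⟩
  · exact ⟨-(B / (2 * A)) - 1, by nlinarith⟩

theorem exists_eq_one_of_discr_eq_neg_three {A B C : ℤ} (hA : 0 < A)
    (hD : B ^ 2 - 4 * A * C = -3) : ∃ x y : ℤ, A * x ^ 2 + B * x * y + C * y ^ 2 = 1 := by
  by_cases hA1 : A = 1
  · exact ⟨1, 0, by rw [hA1]; ring⟩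
  obtain ⟨m, hm⟩ := exists_sq_two_mul_add_le_sq hA B
  -- `(x, y) ↦ (m x - y, x)` carries the form to `C' x² - s x y + A y²`, with `C' < A`.
  set s := 2 * A * m + B
  set C' := A * m ^ 2 + B * m + C
  have hsC' : 4 * A * C' = s ^ 2 + 3 := by linear_combination -hD
  have hC'pos : 0 < C' := by nlinarith
  have hC'lt : C' < A := by
    have hA2 : 2 ≤ A := by omega
    nlinarith
  obtain ⟨x, y, hxy⟩ := exists_eq_one_of_discr_eq_neg_three (B := -s) (C := A) hC'pos
    (by linear_combination -hsC')
  exact ⟨m * x - y, x, by linear_combination hxy⟩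
termination_by A.toNat
decreasing_by omega

theorem exists_isUnit_of_discr_eq_neg_three {A B C : ℤ} (hD : B ^ 2 - 4 * A * C = -3) :
    ∃ x y : ℤ, IsUnit (A * x ^ 2 + B * x * y + C * y ^ 2) := by
  rcases lt_trichotomy A 0 with hA | rfl | hA
  · obtain ⟨x, y, hxy⟩ := exists_eq_one_of_discr_eq_neg_three (B := -B) (C := -C)
      (neg_pos.mpr hA) (by linear_combination hD)
    exact ⟨x, y, Int.isUnit_iff.mpr (Or.inr (by linear_combination -hxy))⟩
  · nlinarith [sq_nonneg B]
  · obtain ⟨x, y, hxy⟩ := exists_eq_one_of_discr_eq_neg_three hA hD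
    exact ⟨x, y, hxy ▸ isUnit_one⟩

namespace Matrix

variable {R : Type*} [CommRing R]

theorem sq_eq_trace_smul_sub_det_smul (M : Matrix (Fin 2) (Fin 2) R) :
    M ^ 2 = M.trace • M - M.det • 1 := by
  rw [M.eta_fin_two]
  ext i j
  fin_cases i <;> fin_cases j <;> simp [sq, det_fin_two, trace_fin_two, one_fin_two] <;> ring

def cyclicMatrix (M : Matrix (Fin 2) (Fin 2) R) (v : Fin 2 → R) : Matrix (Fin 2) (Fin 2) R :=
  !![v 0, (M *ᵥ v) 0; v 1, (M *ᵥ v) 1]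

theorem det_cyclicMatrix (M : Matrix (Fin 2) (Fin 2) R) (v : Fin 2 → R) :
    (cyclicMatrix M v).det =
      M 1 0 * v 0 ^ 2 + (M 1 1 - M 0 0) * v 0 * v 1 + -M 0 1 * v 1 ^ 2 := by
  simp only [cyclicMatrix, mulVec, dotProduct, Fin.sum_univ_two, det_fin_two, of_apply,
    cons_val', cons_val_zero, cons_val_fin_one, cons_val_one, neg_mul]
  ring

theorem mul_cyclicMatrix (M : Matrix (Fin 2) (Fin 2) R) (v : Fin 2 → R) :
    M * cyclicMatrix M v = cyclicMatrix M v * !![0, -M.det; 1, M.trace] := by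
  rw [M.eta_fin_two]
  ext i j
  fin_cases i <;> fin_cases j <;>
    simp [cyclicMatrix, det_fin_two, trace_fin_two, mulVec, dotProduct, Fin.sum_univ_two] <;> ring

theorem det_eq_one_of_pow_three_eq_neg_one {M : Matrix (Fin 2) (Fin 2) ℤ} (h : M ^ 3 = -1) :
    M.det = 1 := by
  have h3 : M.det ^ 3 = 1 ^ 3 := by simp [← det_pow, h, det_neg]
  exact (Odd.pow_inj (by decide)).mp h3

theorem trace_eq_one_of_pow_three_eq_neg_one {M : Matrix (Fin 2) (Fin 2) ℤ} (h : M ^ 3 = -1)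
    (hM : M ≠ -1) : M.trace = 1 := by
  set t := M.trace
  have hsq : M ^ 2 = t • M - 1 := by
    rw [M.sq_eq_trace_smul_sub_det_smul, det_eq_one_of_pow_three_eq_neg_one h, one_smul]
  have hcube : M ^ 3 = t • M ^ 2 - M := by
    rw [pow_succ, hsq, sub_mul, smul_mul_assoc, ← sq, hsq, one_mul]
  have hlin : (t ^ 2 - 1) • M = (t - 1) • (1 : Matrix (Fin 2) (Fin 2) ℤ) := by
    rw [hsq] at hcube
    linear_combination (norm := module) h - hcube
  have htr : (t - 1) ^ 2 * (t + 2) = 0 := by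
    have := congrArg trace hlin
    simp only [trace_smul, trace_one, Fintype.card_fin, smul_eq_mul] at this
    linear_combination this
  rcases mul_eq_zero.mp htr with ht | ht
  · exact sub_eq_zero.mp (pow_eq_zero_iff two_ne_zero |>.mp ht)
  · refine absurd (smul_right_injective _ (by norm_num : (3 : ℤ) ≠ 0) ?_) hM
    rw [eq_neg_of_add_eq_zero_left ht] at hlin
    linear_combination (norm := module) hlin

end Matrix

theorem Matrix.GeneralLinearGroup.eq_one_or_eq_neg_one_of_mem_center {n : Type*} [Fintype n]
    [DecidableEq n] {g : GL n ℤ} (hg : g ∈ Subgroup.center (GL n ℤ)) : g = 1 ∨ g = -1 := by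
  rw [GeneralLinearGroup.center_eq_range_scalar] at hg
  obtain ⟨u, rfl⟩ := hg
  rcases Int.units_eq_one_or u with rfl | rfl
  · exact Or.inl (map_one _)
  · exact Or.inr (Units.ext (by simp))

theorem cls_neg (M : GL2Z) : cls (-M) = cls M := by
  have hneg : (-1 : GL2Z) ∈ Subgroup.center GL2Z := Subgroup.mem_center_iff.mpr fun g ↦ by simp
  rw [cls, cls, ← mul_neg_one, QuotientGroup.mk_mul, (QuotientGroup.eq_one_iff _).mpr hneg, mul_one]

theorem exists_mul_eq_mul_Umat {M : GL2Z} (h : M ^ 3 = -1) (hM : M ≠ -1) :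
    ∃ P : GL2Z, M * P = P * Umat := by
  have h' : M.val ^ 3 = -1 := by simpa using congrArg Units.val h
  have hM' : M.val ≠ -1 := fun e ↦ hM (Units.ext (by simpa using e))
  have hdet := det_eq_one_of_pow_three_eq_neg_one h'
  have htr := trace_eq_one_of_pow_three_eq_neg_one h' hM'
  obtain ⟨x, y, hxy⟩ := exists_isUnit_of_discr_eq_neg_three
    (A := M.val 1 0) (B := M.val 1 1 - M.val 0 0) (C := -M.val 0 1) (by
      rw [det_fin_two] at hdet
      rw [trace_fin_two] at htr
      linear_combination (M.val 0 0 + M.val 1 1 + 1) * htr - 4 * hdet)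
  let P := nonsingInvUnit (cyclicMatrix M.val ![x, y]) (by simpa [det_cyclicMatrix] using hxy)
  refine ⟨P, Units.ext ?_⟩
  change M.val * cyclicMatrix M.val ![x, y] = cyclicMatrix M.val ![x, y] * Umat.val
  rw [mul_cyclicMatrix, hdet, htr]
  rfl

theorem exists_conj_eq_cls_Umat {x : PGL2Z} (hx : orderOf x = 3) :
    ∃ g : PGL2Z, g * x * g⁻¹ = cls Umat := by
  obtain ⟨M, rfl⟩ := QuotientGroup.mk_surjective x
  have hcube : M ^ 3 ∈ Subgroup.center GL2Z := by
    rw [← QuotientGroup.eq_one_iff, QuotientGroup.mk_pow, ← hx, pow_orderOf_eq_one]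
  obtain ⟨N, hNM, hN⟩ : ∃ N : GL2Z, cls N = cls M ∧ N ^ 3 = -1 := by
    rcases GeneralLinearGroup.eq_one_or_eq_neg_one_of_mem_center hcube with h | h
    · exact ⟨-M, cls_neg M, by rw [Odd.neg_pow (by decide), h]⟩
    · exact ⟨M, rfl, h⟩
  have hN1 : N ≠ -1 := by
    rintro rfl
    rw [cls_neg] at hNM
    have hM1 : (M : PGL2Z) = 1 := hNM.symm.trans (QuotientGroup.mk_one _)
    simp [hM1] at hx
  obtain ⟨P, hP⟩ := exists_mul_eq_mul_Umat hN hN1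
  refine ⟨cls P⁻¹, ?_⟩
  change cls P⁻¹ * cls M * (cls P⁻¹)⁻¹ = cls Umat
  rw [← hNM]
  simp only [cls, ← QuotientGroup.mk_inv, ← QuotientGroup.mk_mul, inv_inv]
  rw [mul_assoc, hP, ← mul_assoc, inv_mul_cancel, one_mul]

theorem Subgroup.exists_orderOf_eq_and_zpowers_eq_of_card_eq_prime {G : Type*} [Group G]
    {H : Subgroup G} {p : ℕ} (hp : p.Prime) (hH : Nat.card H = p) :
    ∃ y : G, orderOf y = p ∧ Subgroup.zpowers y = H := by
  have : Finite H := Nat.finite_of_card_ne_zero (hH ▸ hp.ne_zero)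
  have : Nontrivial H := Finite.one_lt_card_iff_nontrivial.mp (hH ▸ hp.one_lt)
  obtain ⟨⟨y, hyH⟩, hy1⟩ := exists_ne (1 : H)
  have hord : orderOf y = p := by
    refine ((Nat.dvd_prime hp).mp (hH ▸ Subgroup.orderOf_dvd_natCard H hyH)).resolve_left ?_
    exact fun h ↦ hy1 (Subtype.ext (orderOf_eq_one_iff.mp h))
  refine ⟨y, hord, Subgroup.eq_of_le_of_card_ge (Subgroup.zpowers_le.mpr hyH) ?_⟩
  rw [Nat.card_zpowers, hord, hH]

/-- Every subgroup of PGL(2,ℤ) of order 3 is conjugate to G₃ = ⟨[U]⟩. -/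
theorem stmt_2 (H : Subgroup PGL2Z) (hH : Nat.card H = 3) :
    ∃ g : PGL2Z,
      Subgroup.map (MulAut.conj g).toMonoidHom H = Subgroup.closure {cls Umat} := by
  obtain ⟨y, hy, rfl⟩ :=
    Subgroup.exists_orderOf_eq_and_zpowers_eq_of_card_eq_prime Nat.prime_three hH
  obtain ⟨g, hg⟩ := exists_conj_eq_cls_Umat hy
  refine ⟨g, ?_⟩
  rw [MonoidHom.map_zpowers, ← Subgroup.zpowers_eq_closure, ← hg]
  rfl
end

section
/- Every element of order 3 in PGL(2,ℤ) is conjugate in PGL(2,ℤ) to [U]. -/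
open Matrix

/-!
A lift `M ∈ GL(2,ℤ)` of an element of order 3 is non-scalar with `M³ = ±1`. By Cayley–Hamilton,
`M³ = (t² - δ) M - t δ` for `t = tr M`, `δ = det M`, so `t² = δ`; hence `δ = 1`, `t = ±1`, and up to
sign `M` has trace 1 and determinant 1, like `U`. A matrix `[[a, b], [c, d]]` of trace 1 and
determinant 1 is the binary quadratic form `c x² + (d - a) x y - b y²` of discriminant `-3`, and
Gauss reduction conjugates it to `U`: a shear makes `|a - d| ≤ |c|`, which forces `|b| < |c|`, and
the swap `b ↔ c` then lowers `|c|` until `c = ±1`.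
-/

namespace Matrix

variable {R : Type*} [CommRing R]

theorem isConj_of_mul_eq_mul {n : Type*} [Fintype n] [DecidableEq n] {A B P : Matrix n n R}
    (hP : IsUnit P.det) (h : P * A = B * P) : IsConj A B :=
  ⟨((isUnit_iff_isUnit_det P).mpr hP).unit, h⟩

theorem isConj_fin_two_shear (a b c d n : R) :
    IsConj !![a, b; c, d] !![a + n * c, b + n * (d - a) - n ^ 2 * c; c, d - n * c] :=
  isConj_of_mul_eq_mul (P := !![1, n; 0, 1]) (by simp [det_fin_two_of]) <| by
    ext i j; fin_cases i <;> fin_cases j <;> simp <;> ring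

theorem isConj_fin_two_swap (a b c d : R) : IsConj !![a, b; c, d] !![d, c; b, a] :=
  isConj_of_mul_eq_mul (P := !![0, 1; 1, 0]) (by simp [det_fin_two_of]) (by simp)

theorem isConj_fin_two_neg_offDiag (a b c d : R) : IsConj !![a, b; c, d] !![a, -b; -c, d] :=
  isConj_of_mul_eq_mul (P := !![-1, 0; 0, 1]) (by simp [det_fin_two_of]) (by simp)

theorem pow_three_fin_two (A : Matrix (Fin 2) (Fin 2) R) :
    A ^ 3 = (A.trace ^ 2 - A.det) • A - (A.trace * A.det) • 1 := by
  rw [eta_fin_two A]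
  ext i j; fin_cases i <;> fin_cases j <;> simp [pow_succ, trace_fin_two, det_fin_two] <;> ring

theorem trace_sq_eq_det_of_pow_three_mem_range_scalar [IsDomain R] {A : Matrix (Fin 2) (Fin 2) R}
    (h3 : A ^ 3 ∈ Set.range (scalar (Fin 2))) (hA : A ∉ Set.range (scalar (Fin 2))) :
    A.trace ^ 2 = A.det := by
  by_contra hk
  have hk : A.trace ^ 2 - A.det ≠ 0 := sub_ne_zero.mpr hk
  obtain ⟨r, hr⟩ := h3
  rw [pow_three_fin_two] at hr
  have entry (i j : Fin 2) : scalar (Fin 2) r i j =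
      (A.trace ^ 2 - A.det) * A i j - A.trace * A.det * (1 : Matrix (Fin 2) (Fin 2) R) i j := by
    rw [hr]; simp
  have hb : A 0 1 = 0 := by simpa [hk] using entry 0 1
  have hc : A 1 0 = 0 := by simpa [hk] using entry 1 0
  have had : A 0 0 = A 1 1 := by simpa [hk] using (entry 0 0).symm.trans (entry 1 1)
  exact hA ⟨A 0 0, by ext i j; fin_cases i <;> fin_cases j <;> simp [hb, hc, had]⟩

end Matrix

theorem Int.exists_abs_add_two_mul_mul_le (x c : ℤ) (hc : c ≠ 0) : ∃ n, |x + 2 * n * c| ≤ |c| := by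
  obtain ⟨q, r, hx, hr⟩ : ∃ q r : ℤ, x = r + 2 * |c| * q ∧ |r| ≤ |c| := by
    have hm : 0 < 2 * c.natAbs := by omega
    refine ⟨x.bdiv (2 * c.natAbs), x.bmod (2 * c.natAbs), ?_, ?_⟩
    · simpa using (Int.bmod_add_bdiv x (2 * c.natAbs)).symm
    · have := Int.le_bmod (x := x) hm
      have := Int.bmod_lt (x := x) hm
      rw [abs_le, Int.abs_eq_natAbs c]; omega
  rcases abs_choice c with h | h <;> rw [h] at hx
  · exact ⟨-q, by rw [hx]; ring_nf; exact hr⟩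
  · exact ⟨q, by rw [hx]; ring_nf; exact hr⟩

section TraceOneDetOne

variable {a b c d : ℤ}

theorem isConj_U_of_lower_eq_one (htr : a + d = 1) (hdet : a * d - b = 1) :
    IsConj !![a, b; 1, d] !![0, -1; 1, 1] := by
  convert isConj_fin_two_shear a b 1 d (-a) using 2
  ext i j; fin_cases i <;> fin_cases j <;> simp <;> linarith

theorem sq_upper_lt_sq_lower_of_reduced (htr : a + d = 1) (hdet : a * d - b * c = 1)
    (had : |a - d| ≤ |c|) (hc : 2 ≤ |c|) : b ^ 2 < c ^ 2 := by
  have hdisc : (a - d) ^ 2 + 4 * b * c = -3 := by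
    linear_combination (a + d + 1) * htr - 4 * hdet
  have h1 : (a - d) ^ 2 ≤ c ^ 2 := sq_le_sq.mpr had
  have h2 : 4 ≤ c ^ 2 := by nlinarith [sq_abs c]
  nlinarith

theorem isConj_U_of_trace_eq_one_of_det_eq_one (htr : a + d = 1) (hdet : a * d - b * c = 1) :
    IsConj !![a, b; c, d] !![0, -1; 1, 1] := by
  induction h : c.natAbs using Nat.strong_induction_on generalizing a b c d with
  | _ k ih =>
  subst h
  have hc0 : c ≠ 0 := by rintro rfl; nlinarith [sq_nonneg (a - d)]
  rcases (show c = 1 ∨ c = -1 ∨ 2 ≤ |c| by rw [Int.abs_eq_natAbs]; omega) with rfl | rfl | hc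
  · exact isConj_U_of_lower_eq_one htr (by linear_combination hdet)
  · exact (isConj_fin_two_neg_offDiag a b (-1) d).trans
      (isConj_U_of_lower_eq_one htr (by linear_combination hdet))
  · obtain ⟨n, hn⟩ := Int.exists_abs_add_two_mul_mul_le (a - d) c hc0
    have hlt : (b + n * (d - a) - n ^ 2 * c) ^ 2 < c ^ 2 :=
      sq_upper_lt_sq_lower_of_reduced (a := a + n * c) (d := d - n * c)
        (by linear_combination htr) (by linear_combination hdet) (by convert hn using 2; ring) hc
    exact (isConj_fin_two_shear a b c d n).trans <| (isConj_fin_two_swap _ _ _ _).trans <|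
      ih _ (Int.natAbs_lt_iff_sq_lt.mpr hlt) (by linear_combination htr)
        (by linear_combination hdet) rfl

end TraceOneDetOne

theorem isConj_cls_Umat_of_trace_eq_one_of_det_eq_one (M : GL2Z)
    (htr : (M : Matrix (Fin 2) (Fin 2) ℤ).trace = 1)
    (hdet : (M : Matrix (Fin 2) (Fin 2) ℤ).det = 1) : IsConj (cls M) (cls Umat) := by
  rw [trace_fin_two] at htr
  rw [det_fin_two] at hdet
  obtain ⟨c, hc⟩ : IsConj (M : Matrix (Fin 2) (Fin 2) ℤ) Umat := by
    rw [eta_fin_two (M : Matrix (Fin 2) (Fin 2) ℤ)]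
    exact isConj_U_of_trace_eq_one_of_det_eq_one htr hdet
  exact (QuotientGroup.mk' _).map_isConj ⟨toUnits c, Units.ext hc⟩

/-- Every element of order 3 in PGL(2,ℤ) is conjugate to [U]. -/
theorem stmt_6 (p : PGL2Z) (hp : orderOf p = 3) : IsConj p (cls Umat) := by
  induction p using QuotientGroup.induction_on with | H M => ?_
  change IsConj (cls M) (cls Umat)
  have hM : M ∉ Subgroup.center GL2Z := fun h => by
    rw [(QuotientGroup.eq_one_iff M).mpr h, orderOf_one] at hp
    omega
  have hM3 : M ^ 3 ∈ Subgroup.center GL2Z := by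
    rw [← QuotientGroup.eq_one_iff, QuotientGroup.mk_pow, ← hp, pow_orderOf_eq_one]
  rw [GeneralLinearGroup.mem_center_iff_val_mem_range_scalar] at hM hM3
  rw [Units.val_pow_eq_pow_val] at hM3
  have hsq := trace_sq_eq_det_of_pow_three_mem_range_scalar hM3 hM
  have hdet : (M : Matrix (Fin 2) (Fin 2) ℤ).det = 1 := by
    rcases Int.isUnit_iff.mp (isUnits_det_units M) with h | h
    · exact h
    · nlinarith [sq_nonneg (M : Matrix (Fin 2) (Fin 2) ℤ).trace]
  rcases sq_eq_one_iff.mp (hsq.trans hdet) with htr | htr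
  · exact isConj_cls_Umat_of_trace_eq_one_of_det_eq_one M htr hdet
  · rw [← cls_neg M]
    exact isConj_cls_Umat_of_trace_eq_one_of_det_eq_one (-M) (by simp [htr])
      (by simp [det_neg, hdet])
end

section
/- If H is a subgroup of PGL(2,ℤ) of order 4 that contains the element [T], then H equals the subgroup G₄ generated by [S] and [N]. -/
open Matrix

/-! The centralizer of `[T]` in `PGL(2,ℤ)` is the Klein four-group `{1, [S], [N], [T]} = G₄`:
if `T M = ± M T` then `M = a • 1 + b • T` or `M = a • N + b • S` with `a² + b² = ±det M = 1`,
which forces `[M]` to be one of those four classes. A group of order `4 = 2²` is abelian, so a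
subgroup `H` of order 4 containing `[T]` lies in this centralizer of order at most 4, hence
equals it. -/

lemma Int.mul_self_add_mul_self_eq_one_iff {a b : ℤ} :
    a * a + b * b = 1 ↔ ((a = 1 ∨ a = -1) ∧ b = 0) ∨ (a = 0 ∧ (b = 1 ∨ b = -1)) := by
  constructor
  · intro h
    have ha : -1 ≤ a ∧ a ≤ 1 := ⟨by nlinarith, by nlinarith⟩
    have hb : -1 ≤ b ∧ b ≤ 1 := ⟨by nlinarith, by nlinarith⟩
    obtain ⟨ha₁, ha₂⟩ := ha
    obtain ⟨hb₁, hb₂⟩ := hb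
    interval_cases a <;> interval_cases b <;> simp_all
  · rintro (⟨ha | ha, rfl⟩ | ⟨rfl, hb | hb⟩) <;> subst_vars <;> norm_num

lemma Matrix.GeneralLinearGroup.det_val_eq_one_or_eq_neg_one {n : Type*} [Fintype n]
    [DecidableEq n] (M : GL n ℤ) : (M : Matrix n n ℤ).det = 1 ∨ (M : Matrix n n ℤ).det = -1 :=
  Int.isUnit_iff.mp ((Matrix.isUnit_iff_isUnit_det _).mp M.isUnit)

lemma cls_eq_cls_iff {M M' : GL2Z} :
    cls M = cls M' ↔
      (M' : Matrix (Fin 2) (Fin 2) ℤ) = M ∨ (M' : Matrix (Fin 2) (Fin 2) ℤ) = -M := by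
  rw [cls, cls, QuotientGroup.eq, GeneralLinearGroup.center_eq_range_scalar, MonoidHom.mem_range]
  constructor
  · rintro ⟨u, hu⟩
    rw [eq_inv_mul_iff_mul_eq] at hu
    rcases Int.units_eq_one_or u with rfl | rfl
    · left; simp [← hu]
    · right; simp [← hu]
  · rintro (h | h)
    · exact ⟨1, by ext1; simp [h]⟩
    · exact ⟨-1, by ext1; simp [h]⟩

lemma cls_eq_or_cls_eq_of_eq_smul_add_smul {M X Y : GL2Z} {a b : ℤ}
    (hM : (M : Matrix (Fin 2) (Fin 2) ℤ) = a • (X : Matrix (Fin 2) (Fin 2) ℤ) + b • Y)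
    (hab : a * a + b * b = 1) : cls M = cls X ∨ cls M = cls Y := by
  simp only [eq_comm (a := cls M), cls_eq_cls_iff]
  rcases Int.mul_self_add_mul_self_eq_one_iff.mp hab with ⟨ha | ha, rfl⟩ | ⟨rfl, hb | hb⟩ <;>
    simp_all

lemma cls_eq_one_or_eq_cls_Tmat_of_commute {M : GL2Z}
    (h : (Tmat * M : Matrix (Fin 2) (Fin 2) ℤ) = M * Tmat) : cls M = 1 ∨ cls M = cls Tmat := by
  obtain ⟨a, b, c, d, hM⟩ : ∃ a b c d, (M : Matrix (Fin 2) (Fin 2) ℤ) = !![a, b; c, d] :=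
    ⟨_, _, _, _, eta_fin_two _⟩
  simp only [hM, Tmat, mul_fin_two] at h
  obtain ⟨hc, hd⟩ : c = -b ∧ d = a := by simp at h; omega
  subst c d
  have hdet := GeneralLinearGroup.det_val_eq_one_or_eq_neg_one M
  rw [hM, det_fin_two_of] at hdet
  refine cls_eq_or_cls_eq_of_eq_smul_add_smul (X := 1) (a := a) (b := -b) ?_
    (by rcases hdet with h | h <;> nlinarith)
  rw [hM, Units.val_one, one_fin_two]
  simp [Tmat]

lemma cls_eq_cls_Nmat_or_eq_cls_Smat_of_anticommute {M : GL2Z}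
    (h : (Tmat * M : Matrix (Fin 2) (Fin 2) ℤ) = -(M * Tmat)) :
    cls M = cls Nmat ∨ cls M = cls Smat := by
  obtain ⟨a, b, c, d, hM⟩ : ∃ a b c d, (M : Matrix (Fin 2) (Fin 2) ℤ) = !![a, b; c, d] :=
    ⟨_, _, _, _, eta_fin_two _⟩
  simp only [hM, Tmat, mul_fin_two] at h
  obtain ⟨hc, hd⟩ : c = b ∧ d = -a := by simp at h; omega
  subst c d
  have hdet := GeneralLinearGroup.det_val_eq_one_or_eq_neg_one M
  rw [hM, det_fin_two_of] at hdet
  refine cls_eq_or_cls_eq_of_eq_smul_add_smul (a := -a) (b := b) ?_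
    (by rcases hdet with h | h <;> nlinarith)
  rw [hM]
  simp [Nmat, Smat]

lemma centralizer_cls_Tmat_subset :
    (Subgroup.centralizer {cls Tmat} : Set PGL2Z) ⊆ {1, cls Smat, cls Nmat, cls Tmat} := by
  intro x hx
  obtain ⟨M, rfl⟩ : ∃ M, cls M = x := QuotientGroup.mk_surjective x
  rw [SetLike.mem_coe, Subgroup.mem_centralizer_singleton_iff] at hx
  change cls (M * Tmat) = cls (Tmat * M) at hx
  rcases cls_eq_cls_iff.mp hx with h | h
  · rcases cls_eq_one_or_eq_cls_Tmat_of_commute h with h' | h' <;> simp [h']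
  · rcases cls_eq_cls_Nmat_or_eq_cls_Smat_of_anticommute h with h' | h' <;> simp [h']

instance : Finite (Subgroup.centralizer {cls Tmat}) :=
  ((Set.toFinite _).subset centralizer_cls_Tmat_subset).to_subtype

lemma card_centralizer_cls_Tmat_le : Nat.card (Subgroup.centralizer {cls Tmat}) ≤ 4 := by
  classical
  calc Nat.card (Subgroup.centralizer {cls Tmat})
      ≤ Nat.card (({1, cls Smat, cls Nmat, cls Tmat} : Finset PGL2Z) : Set PGL2Z) :=
        Nat.card_mono (Finset.finite_toSet _) (by simpa using centralizer_cls_Tmat_subset)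
    _ ≤ 4 := by rw [Nat.card_coe_set_eq, Set.ncard_coe_finset]; exact Finset.card_le_four

lemma cls_Smat_mul_cls_Nmat : cls Smat * cls Nmat = cls Tmat :=
  cls_eq_cls_iff.mpr (.inr (by decide))

lemma commute_cls_Smat_cls_Nmat : Commute (cls Smat) (cls Nmat) :=
  cls_eq_cls_iff.mpr (.inr (by decide))

lemma centralizer_cls_Tmat_eq_closure :
    Subgroup.centralizer {cls Tmat} = Subgroup.closure {cls Smat, cls Nmat} := by
  have hS : cls Smat ∈ Subgroup.closure {cls Smat, cls Nmat} :=
    Subgroup.subset_closure (Set.mem_insert _ _)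
  have hN : cls Nmat ∈ Subgroup.closure {cls Smat, cls Nmat} :=
    Subgroup.subset_closure (Set.mem_insert_of_mem _ rfl)
  apply le_antisymm
  · intro x hx
    rcases centralizer_cls_Tmat_subset hx with rfl | rfl | rfl | rfl
    · exact one_mem _
    · exact hS
    · exact hN
    · exact cls_Smat_mul_cls_Nmat ▸ mul_mem hS hN
  · rw [Subgroup.closure_le, Set.insert_subset_iff, Set.singleton_subset_iff,
      SetLike.mem_coe, SetLike.mem_coe, Subgroup.mem_centralizer_singleton_iff,
      Subgroup.mem_centralizer_singleton_iff, ← cls_Smat_mul_cls_Nmat]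
    exact ⟨((Commute.refl _).mul_right commute_cls_Smat_cls_Nmat).eq,
      (commute_cls_Smat_cls_Nmat.symm.mul_right (Commute.refl _)).eq⟩

/-- A subgroup of PGL(2,ℤ) of order 4 containing [T] equals G₄ = ⟨[S],[N]⟩. -/
theorem stmt_10 (H : Subgroup PGL2Z) (hH : Nat.card H = 4) (hT : cls Tmat ∈ H) :
    H = Subgroup.closure {cls Smat, cls Nmat} := by
  have : Fact (Nat.Prime 2) := ⟨Nat.prime_two⟩
  have : IsMulCommutative H := IsPGroup.isMulCommutative_of_card_eq_prime_sq (p := 2) hH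
  have hle : H ≤ Subgroup.centralizer {cls Tmat} :=
    (Subgroup.le_centralizer_iff_isMulCommutative.mpr this).trans
      (Subgroup.centralizer_le (Set.singleton_subset_iff.mpr hT))
  rw [← centralizer_cls_Tmat_eq_closure]
  exact Subgroup.eq_of_le_of_card_ge hle (hH ▸ card_centralizer_cls_Tmat_le)
end

section
/- If p ∈ PGL(2,ℤ) has order 2 and satisfies [U]² · p = p · [U] (equivalently, p [U] p⁻¹ = [U]⁻¹), then p equals [[ -1,-1],[0,1]] modulo ±I, [S], or [[-1,0],[1,1]] modulo ±I (corresponding to the linear fractional transforms −x−1, 1/x, and −x/(x+1) respectively). -/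
open Matrix

lemma neg_one_mem_center' : (-1 : GL2Z) ∈ Subgroup.center GL2Z := by
  rw [Subgroup.mem_center_iff]; intro g; rw [mul_neg_one, neg_one_mul]

lemma center_char' (A : GL2Z) (h : A ∈ Subgroup.center GL2Z) : A = 1 ∨ A = -1 := by
  rw [Subgroup.mem_center_iff] at h
  have hS := congrArg Units.val (h Smat)
  have hT := congrArg Units.val (h Tmat)
  simp only [Units.val_mul, Smat, Tmat] at hS hT
  set Av : Matrix (Fin 2) (Fin 2) ℤ := A.val with hAv
  have e1 := congrFun (congrFun hS 0) 0
  have e2 := congrFun (congrFun hS 0) 1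
  have e3 := congrFun (congrFun hT 0) 0
  simp [Matrix.mul_apply, Fin.sum_univ_two] at e1 e2 e3
  have hb : Av 0 1 = 0 := by omega
  have hc : Av 1 0 = 0 := by omega
  have hdet : Av.det = 1 ∨ Av.det = -1 := by
    have : IsUnit Av.det := (Matrix.isUnit_iff_isUnit_det Av).mp A.isUnit
    rwa [Int.isUnit_iff] at this
  rw [Matrix.det_fin_two, hb, hc, e2] at hdet
  have ha : Av 0 0 = 1 ∨ Av 0 0 = -1 := by
    rcases hdet with h1 | h1
    · rw [← mul_self_eq_one_iff]; omega
    · exfalso; nlinarith [mul_self_nonneg (Av 0 0)]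
  have hA : Av = !![Av 0 0, Av 0 1; Av 1 0, Av 1 1] := Matrix.eta_fin_two Av
  rcases ha with h1 | h1
  · left
    ext : 1
    rw [Units.val_one, ← hAv, hA, hb, hc, e2, h1, Matrix.one_fin_two]
  · right
    ext : 1
    rw [Units.val_neg, Units.val_one, ← hAv, hA, hb, hc, e2, h1, Matrix.one_fin_two]
    norm_num

lemma cls_eq_of' (A B : GL2Z)
    (h : (A : Matrix (Fin 2) (Fin 2) ℤ) = B ∨ (A : Matrix (Fin 2) (Fin 2) ℤ) = -B) :
    cls A = cls B := by
  rcases h with h | h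
  · congr 1; exact Units.ext h
  · have hA : A = -1 * B := by
      apply Units.ext
      rw [Units.val_mul, Units.val_neg, Units.val_one, neg_one_mul, h]
    rw [cls, hA, QuotientGroup.mk_mul]
    have : (QuotientGroup.mk (-1 : GL2Z) : PGL2Z) = 1 :=
      (QuotientGroup.eq_one_iff _).mpr neg_one_mem_center'
    rw [this, one_mul]; rfl

lemma solve_quad' (a c : ℤ) (h : a*a + a*c + c*c = 1) :
    (a = 1 ∧ c = 0) ∨ (a = -1 ∧ c = 0) ∨ (a = 0 ∧ c = 1) ∨ (a = 0 ∧ c = -1) ∨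
    (a = 1 ∧ c = -1) ∨ (a = -1 ∧ c = 1) := by
  have h1 : -1 ≤ c := by nlinarith [sq_nonneg (2*a+c)]
  have h2 : c ≤ 1 := by nlinarith [sq_nonneg (2*a+c)]
  have h3 : -1 ≤ a := by nlinarith [sq_nonneg (a+2*c)]
  have h4 : a ≤ 1 := by nlinarith [sq_nonneg (a+2*c)]
  interval_cases a <;> interval_cases c <;> omega

/-- If p ∈ PGL(2,ℤ) has order 2 and [U]² · p = p · [U], then p is one of
[-x-1], [1/x], [-x/(x+1)], i.e. the classes of !![-1,-1;0,1], S, !![-1,0;1,1]. -/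
theorem stmt_14 (p : PGL2Z) (hp : orderOf p = 2)
    (hc : (cls Umat) ^ 2 * p = p * cls Umat) :
    p = cls ⟨!![-1,-1;0,1], !![-1,-1;0,1], by decide, by decide⟩ ∨
    p = cls Smat ∨
    p = cls ⟨!![-1,0;1,1], !![-1,0;1,1], by decide, by decide⟩ := by
  obtain ⟨M, rfl⟩ := QuotientGroup.mk_surjective p
  have hc' : (QuotientGroup.mk (Umat ^ 2 * M) : PGL2Z) = QuotientGroup.mk (M * Umat) := by
    rw [QuotientGroup.mk_mul, QuotientGroup.mk_mul]
    exact hc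
  have hmem := QuotientGroup.eq.mp hc'
  rcases center_char' _ hmem with h1 | h1
  · -- (U²M)⁻¹ (MU) = 1, impossible
    exfalso
    have h2 : M * Umat = Umat ^ 2 * M := (inv_mul_eq_one.mp h1).symm
    have h3 := congrArg Units.val h2
    simp only [Units.val_mul, Units.val_pow_eq_pow_val, Umat, pow_two] at h3
    set Mv : Matrix (Fin 2) (Fin 2) ℤ := M.val with hMv
    have e1 := congrFun (congrFun h3 0) 0
    have e2 := congrFun (congrFun h3 0) 1
    have e3 := congrFun (congrFun h3 1) 0
    have e4 := congrFun (congrFun h3 1) 1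
    simp [Matrix.mul_apply, Fin.sum_univ_two] at e1 e2 e3 e4
    have hz : Mv 0 0 = 0 ∧ Mv 0 1 = 0 ∧ Mv 1 0 = 0 ∧ Mv 1 1 = 0 := by omega
    have hdet : Mv.det = 1 ∨ Mv.det = -1 := by
      have : IsUnit Mv.det := (Matrix.isUnit_iff_isUnit_det Mv).mp M.isUnit
      rwa [Int.isUnit_iff] at this
    rw [Matrix.det_fin_two, hz.1, hz.2.1, hz.2.2.1, hz.2.2.2] at hdet
    norm_num at hdet
  · -- MU = -(U²M)
    have h2 : M * Umat = Umat ^ 2 * M * (-1) := by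
      rw [← h1, mul_inv_cancel_left]
    have h3 := congrArg Units.val h2
    simp only [Units.val_mul, Units.val_pow_eq_pow_val, Units.val_neg, Units.val_one,
      Umat, pow_two, mul_neg_one] at h3
    have hUU : (!![0,-1;1,1] : Matrix (Fin 2) (Fin 2) ℤ) * !![0,-1;1,1] = !![-1,-1;1,0] := by
      norm_num [Matrix.mul_fin_two]
    rw [hUU] at h3
    set Mv : Matrix (Fin 2) (Fin 2) ℤ := M.val with hMv
    have e1 := congrFun (congrFun h3 0) 0
    have e2 := congrFun (congrFun h3 0) 1
    have e3 := congrFun (congrFun h3 1) 0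
    have e4 := congrFun (congrFun h3 1) 1
    simp [Matrix.mul_apply, Fin.sum_univ_two, Matrix.neg_apply, Matrix.vecMul,
      dotProduct] at e1 e2 e3 e4
    have hdet : Mv.det = 1 ∨ Mv.det = -1 := by
      have : IsUnit Mv.det := (Matrix.isUnit_iff_isUnit_det Mv).mp M.isUnit
      rwa [Int.isUnit_iff] at this
    rw [Matrix.det_fin_two] at hdet
    set a := Mv 0 0 with hA00
    set b := Mv 0 1 with hA01
    set c := Mv 1 0 with hA10
    set d := Mv 1 1 with hA11
    have hb : b = a + c := by omega
    have hd : d = -a := by omega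
    have h' : -(a*a + a*c + c*c) = 1 ∨ -(a*a + a*c + c*c) = -1 := by
      have key : -(a*a + a*c + c*c) = a * d - b * c := by rw [hb, hd]; ring
      rw [key]; exact hdet
    have hq : a*a + a*c + c*c = 1 := by
      rcases h' with h | h
      · exfalso; nlinarith [sq_nonneg (2*a+c), sq_nonneg c]
      · linarith
    have hM : Mv = !![a, b; c, d] := Matrix.eta_fin_two Mv
    rw [hb, hd] at hM
    rcases solve_quad' a c hq with ⟨ha, hcc⟩ | ⟨ha, hcc⟩ | ⟨ha, hcc⟩ | ⟨ha, hcc⟩ |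
      ⟨ha, hcc⟩ | ⟨ha, hcc⟩ <;> rw [ha, hcc] at hM <;> norm_num at hM
    · exact Or.inl (cls_eq_of' M _ (Or.inr (by rw [← hMv, hM] <;> try norm_num)))
    · exact Or.inl (cls_eq_of' M _ (Or.inl (by rw [← hMv, hM] <;> try norm_num [Smat])))
    · exact Or.inr (Or.inl (cls_eq_of' M _ (Or.inl (by rw [← hMv, hM] <;> try norm_num [Smat]))))
    · exact Or.inr (Or.inl (cls_eq_of' M _ (Or.inr (by rw [← hMv, hM] <;> try norm_num [Smat]))))
    · exact Or.inr (Or.inr (cls_eq_of' M _ (Or.inr (by rw [← hMv, hM] <;> try norm_num))))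
    · exact Or.inr (Or.inr (cls_eq_of' M _ (Or.inl (by rw [← hMv, hM] <;> try norm_num))))
end
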